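/- Assume condition (g2) and that G is differentiable on (0,∞) with G' = g. Let u, v : ℝ^N → ℝ be measurable with ρ(u) < ∞ and ρ(v) < ∞, and assume the function (x,y) ↦ g(|v(x)−v(y)|/|x−y|^s)·sgn(v(x)−v(y))·((u−v)(x)−(u−v)(y))·|x−y|^(−s−N) is integrable on Q. Then ρ(u) − ρ(v) ≥ ∬_Q g(|v(x)−v(y)|/|x−y|^s)·sgn(v(x)−v(y))·((u−v)(x)−(u−v)(y))·|x−y|^(−s−N) dx dy. -/

import Mathlib

open MeasureTheory Set Real Filter
open scoped ENNReal

noncomputable section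

/-- `ℝ^N`. -/
abbrev Euc (N : ℕ) : Type := EuclideanSpace ℝ (Fin N)

/-- The open unit ball of `ℝ^N`. -/
def B1 (N : ℕ) : Set (Euc N) := Metric.ball 0 1

/-- `Q = ℝ^{2N} \ (B₁ᶜ × B₁ᶜ)`. -/
def Qset (N : ℕ) : Set (Euc N × Euc N) := {z : Euc N × Euc N | z.1 ∈ B1 N ∨ z.2 ∈ B1 N}

/-- The Young function `G(t) = ∫₀ᵗ g(τ) dτ`. -/
def YoungG (g : ℝ → ℝ) (t : ℝ) : ℝ := ∫ τ in (0:ℝ)..t, g τ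

/-- The modular `ρ(u) = ∬_Q G(|u(x)−u(y)|/|x−y|^s)·|x−y|^(−N) dx dy`. -/
def rho (N : ℕ) (s : ℝ) (g : ℝ → ℝ) (u : Euc N → ℝ) : ℝ≥0∞ :=
  ∫⁻ z in Qset N,
    ENNReal.ofReal (YoungG g (|u z.1 - u z.2| / dist z.1 z.2 ^ s) * dist z.1 z.2 ^ (-(N : ℝ)))

/-- The integrand `g(|u(x)−u(y)|/|x−y|^s)·sgn(u(x)−u(y))·(φ(x)−φ(y))·|x−y|^(−s−N)`. -/
def weakKernel (N : ℕ) (s : ℝ) (g : ℝ → ℝ) (u φ : Euc N → ℝ) (z : Euc N × Euc N) : ℝ :=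
  g (|u z.1 - u z.2| / dist z.1 z.2 ^ s) * Real.sign (u z.1 - u z.2) *
    (φ z.1 - φ z.2) * dist z.1 z.2 ^ (-s - (N : ℝ))

/-- A function on `ℝ^N` is radial if its value depends only on `|x|`. -/
def IsRadial (N : ℕ) (u : Euc N → ℝ) : Prop := ∀ x y : Euc N, ‖x‖ = ‖y‖ → u x = u y

/-- Basic structural hypotheses on `g`: right-continuous, non-decreasing on `[0,∞)`,
`g(0) = 0`, `g > 0` on `(0,∞)`, and `g(t) → ∞` as `t → ∞`. -/
def YoungHyp (g : ℝ → ℝ) : Prop :=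
  g 0 = 0 ∧ (∀ t > (0:ℝ), 0 < g t) ∧ MonotoneOn g (Set.Ici 0) ∧
    (∀ t ≥ (0:ℝ), ContinuousWithinAt g (Set.Ici t) t) ∧
    Filter.Tendsto g Filter.atTop Filter.atTop

/-- Condition (g): `1 < q⁻ ≤ t·g(t)/G(t) ≤ q⁺ < ∞` for all `t > 0`. -/
def CondG (g : ℝ → ℝ) (qm qp : ℝ) : Prop :=
  1 < qm ∧ qm ≤ qp ∧
    ∀ t > (0:ℝ), qm ≤ t * g t / YoungG g t ∧ t * g t / YoungG g t ≤ qp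

/-- Condition (g2): `t ↦ G(√t)` is convex on `[0,∞)`. -/
def CondG2 (g : ℝ → ℝ) : Prop :=
  ConvexOn ℝ (Set.Ici (0:ℝ)) (fun t => YoungG g (Real.sqrt t))

/-- `u` is a weak solution of `(−Δ_g)^s u + u = |u|^{p−2} u` in `B₁` with the nonlocal
Neumann condition, tested against all measurable radial `φ` with finite modular whose
restriction to `B₁` lies in `L² ∩ L^p`. -/
def IsWeakSolution (N : ℕ) (s p : ℝ) (g : ℝ → ℝ) (u : Euc N → ℝ) : Prop :=
  ∀ φ : Euc N → ℝ, Measurable φ → IsRadial N φ →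
    rho N s g φ < ⊤ →
    MemLp φ 2 (volume.restrict (B1 N)) →
    MemLp φ (ENNReal.ofReal p) (volume.restrict (B1 N)) →
    IntegrableOn (weakKernel N s g u φ) (Qset N) ∧
      ∫ z in Qset N, weakKernel N s g u φ z =
        ∫ x in B1 N, (|u x| ^ (p - 2) * u x - u x) * φ x

/-!
Since `g` is non-decreasing, `G` lies above its tangent lines on `[0, ∞)`:
`G(t₁) - G(t₂) ≥ g(t₂)(t₁ - t₂)`. Take `t₁ = |a|/r^s`, `t₂ = |b|/r^s` with `a = u(x) - u(y)`,
`b = v(x) - v(y)`, `r = |x - y|`, and use `sgn b · (a - b) ≤ |a| - |b|`: the integrand on the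
left is pointwise at most the difference of the integrands of `ρ(u)` and `ρ(v)`, which are
integrable since the modulars are finite. Integrate over `Q`.
-/

section YoungFunction

variable {g : ℝ → ℝ}

theorem intervalIntegrable_of_monotoneOn_Ici (hg : MonotoneOn g (Ici 0)) {a b : ℝ}
    (ha : 0 ≤ a) (hb : 0 ≤ b) : IntervalIntegrable g volume a b :=
  (hg.mono fun _ hx => (le_min ha hb).trans hx.1).intervalIntegrable

theorem youngG_sub_youngG (hg : MonotoneOn g (Ici 0)) {a b : ℝ} (ha : 0 ≤ a) (hb : 0 ≤ b) :
    YoungG g a - YoungG g b = ∫ τ in b..a, g τ :=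
  sub_eq_of_eq_add' (intervalIntegral.integral_add_adjacent_intervals
    (intervalIntegrable_of_monotoneOn_Ici hg le_rfl hb)
    (intervalIntegrable_of_monotoneOn_Ici hg hb ha)).symm

theorem mul_sub_le_youngG_sub (hg : MonotoneOn g (Ici 0)) {t₁ t₂ : ℝ}
    (h₁ : 0 ≤ t₁) (h₂ : 0 ≤ t₂) : g t₂ * (t₁ - t₂) ≤ YoungG g t₁ - YoungG g t₂ := by
  rw [youngG_sub_youngG hg h₁ h₂]
  rcases le_total t₂ t₁ with h | h
  · calc g t₂ * (t₁ - t₂) = ∫ _ in t₂..t₁, g t₂ := by simp [mul_comm]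
      _ ≤ ∫ τ in t₂..t₁, g τ :=
        intervalIntegral.integral_mono_on h intervalIntegrable_const
          (intervalIntegrable_of_monotoneOn_Ici hg h₂ h₁)
          fun τ hτ => hg h₂ (h₂.trans hτ.1) hτ.1
  · calc g t₂ * (t₁ - t₂) = -∫ _ in t₁..t₂, g t₂ := by
          simp only [intervalIntegral.integral_const, smul_eq_mul]; ring
      _ ≤ -∫ τ in t₁..t₂, g τ :=
        neg_le_neg <| intervalIntegral.integral_mono_on h
          (intervalIntegrable_of_monotoneOn_Ici hg h₁ h₂) intervalIntegrable_const
          fun τ hτ => hg (h₁.trans hτ.1) h₂ hτ.2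
      _ = ∫ τ in t₂..t₁, g τ := (intervalIntegral.integral_symm _ _).symm

theorem monotoneOn_youngG (hg : MonotoneOn g (Ici 0)) (hg₀ : 0 ≤ g 0) :
    MonotoneOn (YoungG g) (Ici 0) := fun a ha b hb hab => by
  have hga : 0 ≤ g a := hg₀.trans (hg self_mem_Ici ha ha)
  nlinarith [mul_sub_le_youngG_sub hg hb ha]

theorem youngG_nonneg (hg : MonotoneOn g (Ici 0)) (hg₀ : 0 ≤ g 0) {t : ℝ} (ht : 0 ≤ t) :
    0 ≤ YoungG g t := by
  simpa [YoungG] using monotoneOn_youngG hg hg₀ self_mem_Ici ht ht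

end YoungFunction

theorem sign_mul_sub_le_abs_sub_abs (a b : ℝ) : Real.sign b * (a - b) ≤ |a| - |b| := by
  rcases lt_trichotomy b 0 with h | rfl | h
  · rw [Real.sign_of_neg h, abs_of_neg h]; linarith [neg_abs_le a]
  · simp
  · rw [Real.sign_of_pos h, abs_of_pos h]; linarith [le_abs_self a]

theorem MonotoneOn.measurable_comp_of_nonneg {α : Type*} [MeasurableSpace α] {f : ℝ → ℝ}
    (hf : MonotoneOn f (Ici 0)) {h : α → ℝ} (hh : Measurable h) (h₀ : ∀ x, 0 ≤ h x) :
    Measurable fun x => f (h x) := by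
  have hmono : Monotone fun t => f (max t 0) := fun a b hab =>
    hf (le_max_right a 0) (le_max_right b 0) (max_le_max_right 0 hab)
  simpa only [Function.comp_def, max_eq_left (h₀ _)] using hmono.measurable.comp hh

def modularDensity (N : ℕ) (s : ℝ) (g : ℝ → ℝ) (u : Euc N → ℝ) (z : Euc N × Euc N) : ℝ :=
  YoungG g (|u z.1 - u z.2| / dist z.1 z.2 ^ s) * dist z.1 z.2 ^ (-(N : ℝ))

section Modular

variable {N : ℕ} {s : ℝ} {g : ℝ → ℝ} {u v : Euc N → ℝ}

theorem modularDensity_nonneg (hg : MonotoneOn g (Ici 0)) (hg₀ : 0 ≤ g 0)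
    (z : Euc N × Euc N) : 0 ≤ modularDensity N s g u z :=
  mul_nonneg (youngG_nonneg hg hg₀ (by positivity)) (by positivity)

theorem measurable_modularDensity (hg : MonotoneOn g (Ici 0)) (hg₀ : 0 ≤ g 0)
    (hu : Measurable u) : Measurable (modularDensity N s g u) := by
  have hdist : Measurable fun z : Euc N × Euc N => dist z.1 z.2 :=
    (continuous_fst.dist continuous_snd).measurable
  have hquot : Measurable fun z : Euc N × Euc N => |u z.1 - u z.2| / dist z.1 z.2 ^ s :=
    ((hu.comp measurable_fst).sub (hu.comp measurable_snd)).abs.div (hdist.pow_const s)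
  exact ((monotoneOn_youngG hg hg₀).measurable_comp_of_nonneg hquot fun _ => by positivity).mul
    (hdist.pow_const _)

theorem rho_toReal_eq_integral (hg : MonotoneOn g (Ici 0)) (hg₀ : 0 ≤ g 0)
    (hu : Measurable u) :
    (rho N s g u).toReal = ∫ z in Qset N, modularDensity N s g u z :=
  (integral_eq_lintegral_of_nonneg_ae (ae_of_all _ (modularDensity_nonneg hg hg₀))
    (measurable_modularDensity hg hg₀ hu).aestronglyMeasurable).symm

theorem integrableOn_modularDensity (hg : MonotoneOn g (Ici 0)) (hg₀ : 0 ≤ g 0)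
    (hu : Measurable u) (hρ : rho N s g u < ⊤) :
    IntegrableOn (modularDensity N s g u) (Qset N) :=
  ⟨(measurable_modularDensity hg hg₀ hu).aestronglyMeasurable,
    (hasFiniteIntegral_iff_ofReal (ae_of_all _ (modularDensity_nonneg hg hg₀))).mpr hρ⟩

theorem weakKernel_le_modularDensity_sub (hg : MonotoneOn g (Ici 0)) (hg₀ : 0 ≤ g 0)
    (z : Euc N × Euc N) :
    weakKernel N s g v (fun x => u x - v x) z ≤
      modularDensity N s g u z - modularDensity N s g v z := by
  rcases eq_or_ne z.1 z.2 with hz | hz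
  · simp [weakKernel, modularDensity, hz, YoungG]
  set r := dist z.1 z.2
  have hr : 0 < r := dist_pos.mpr hz
  set a := u z.1 - u z.2
  set b := v z.1 - v z.2
  have hgb : 0 ≤ g (|b| / r ^ s) :=
    hg₀.trans (hg self_mem_Ici (mem_Ici.mpr (by positivity)) (by positivity))
  have hkernel : weakKernel N s g v (fun x => u x - v x) z =
      g (|b| / r ^ s) * (Real.sign b * (a - b) / r ^ s) * r ^ (-(N : ℝ)) := by
    rw [weakKernel, sub_eq_add_neg (-s), rpow_add hr, rpow_neg hr.le]
    ring
  rw [hkernel, modularDensity, modularDensity, ← sub_mul]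
  gcongr
  calc g (|b| / r ^ s) * (Real.sign b * (a - b) / r ^ s)
      ≤ g (|b| / r ^ s) * (|a| / r ^ s - |b| / r ^ s) := by
        rw [← sub_div]; gcongr; exact sign_mul_sub_le_abs_sub_abs a b
    _ ≤ _ := mul_sub_le_youngG_sub hg (by positivity) (by positivity)

end Modular

theorem statement14_general
    (N : ℕ) (s : ℝ)
    (g : ℝ → ℝ) (hg : YoungHyp g)
    (u v : Euc N → ℝ) (hu : Measurable u) (hv : Measurable v)
    (hru : rho N s g u < ⊤) (hrv : rho N s g v < ⊤)
    (hint : IntegrableOn (weakKernel N s g v (fun x => u x - v x)) (Qset N)) :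
    (∫ z in Qset N, weakKernel N s g v (fun x => u x - v x) z) ≤
      (rho N s g u).toReal - (rho N s g v).toReal := by
  obtain ⟨hg0, -, hmono, -, -⟩ := hg
  have hg₀ : 0 ≤ g 0 := hg0.ge
  have hiu := integrableOn_modularDensity hmono hg₀ hu hru
  have hiv := integrableOn_modularDensity hmono hg₀ hv hrv
  calc (∫ z in Qset N, weakKernel N s g v (fun x => u x - v x) z)
      ≤ ∫ z in Qset N, (modularDensity N s g u z - modularDensity N s g v z) :=
        integral_mono hint (hiu.sub hiv) (weakKernel_le_modularDensity_sub hmono hg₀)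
    _ = (rho N s g u).toReal - (rho N s g v).toReal := by
        rw [integral_sub hiu hiv, rho_toReal_eq_integral hmono hg₀ hu,
          rho_toReal_eq_integral hmono hg₀ hv]

/-- convexity inequality for the modular, cf. (3.10):
`ρ(u) − ρ(v) ≥ ∬_Q g(...)·sgn(v(x)−v(y))·((u−v)(x)−(u−v)(y))·|x−y|^{−s−N}`. -/
theorem statement14
    (N : ℕ) (hN : 2 ≤ N) (s : ℝ) (hs : s ∈ Set.Ioo (0:ℝ) 1)
    (g : ℝ → ℝ) (hg : YoungHyp g) (hg2 : CondG2 g)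
    (hderiv : ∀ t > (0:ℝ), HasDerivAt (YoungG g) (g t) t)
    (u v : Euc N → ℝ) (hu : Measurable u) (hv : Measurable v)
    (hru : rho N s g u < ⊤) (hrv : rho N s g v < ⊤)
    (hint : IntegrableOn (weakKernel N s g v (fun x => u x - v x)) (Qset N)) :
    (∫ z in Qset N, weakKernel N s g v (fun x => u x - v x) z) ≤
      (rho N s g u).toReal - (rho N s g v).toReal :=
  statement14_general N s g hg u v hu hv hru hrv hint
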